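/- α-equivalence is captured by syntactic equality of translations: for ground αProlog terms t and u, ⊨ t ≈ u holds if and only if φ(t) = φ(u), where equality of Gᵐ terms is modulo αβη-conversion of λ-terms. -/

import Mathlib

/-! ### αProlog terms (name-restricted): t ::= a | X | (a b)·t | f(t⃗) | ⟨a⟩t.
Names, variables and function symbols are all modeled as natural numbers. -/

inductive ATerm : Type
  | name : ℕ → ATerm                 -- a name a
  | var  : ℕ → ATerm                 -- a first-order variable X
  | swp  : ℕ → ℕ → ATerm → ATerm     -- a swapping (a b)·t
  | fn   : ℕ → List ATerm → ATerm    -- f(t₁,...,tₙ)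
  | abs  : ℕ → ATerm → ATerm         -- a name-abstraction ⟨a⟩t

/-- Action of the swapping (a b) on a name. -/
def swapName (a b c : ℕ) : ℕ := if c = a then b else if c = b then a else c

/-- Applying the swapping (a b) to a term, as an operation: it renames names
everywhere (including in name-abstractions and suspended swappings) and leaves
variables unchanged ((a b)·X = X). -/
def ATerm.swapf (a b : ℕ) : ATerm → ATerm
  | .name c    => .name (swapName a b c)
  | .var X     => .var X
  | .swp c d t => .swp (swapName a b c) (swapName a b d) (ATerm.swapf a b t)
  | .fn f ts   => .fn f (ts.attach.map (fun x => ATerm.swapf a b x.1))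
  | .abs c t   => .abs (swapName a b c) (ATerm.swapf a b t)
decreasing_by
  all_goals simp_wf
  have := List.sizeOf_lt_of_mem x.2
  omega

/-- Evaluating away the syntactic swappings in a term. -/
def ATerm.eval : ATerm → ATerm
  | .name c    => .name c
  | .var X     => .var X
  | .swp a b t => (ATerm.eval t).swapf a b
  | .fn f ts   => .fn f (ts.attach.map (fun x => ATerm.eval x.1))
  | .abs c t   => .abs c (ATerm.eval t)
decreasing_by
  all_goals simp_wf
  have := List.sizeOf_lt_of_mem x.2
  omega

/-- Free variables of a term. -/
def ATerm.fv : ATerm → Finset ℕ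
  | .name _    => ∅
  | .var X     => {X}
  | .swp _ _ t => ATerm.fv t
  | .fn _ ts   => ts.attach.foldr (fun x s => ATerm.fv x.1 ∪ s) ∅
  | .abs _ t   => ATerm.fv t
decreasing_by
  all_goals simp_wf
  have := List.sizeOf_lt_of_mem x.2
  omega

/-- Names occurring in a term (name-abstraction is not a real binder, so the
name a occurs free in ⟨a⟩a). -/
def ATerm.names : ATerm → Finset ℕ
  | .name c    => {c}
  | .var _     => ∅
  | .swp a b t => {a} ∪ {b} ∪ ATerm.names t
  | .fn _ ts   => ts.attach.foldr (fun x s => ATerm.names x.1 ∪ s) ∅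
  | .abs c t   => {c} ∪ ATerm.names t
decreasing_by
  all_goals simp_wf
  have := List.sizeOf_lt_of_mem x.2
  omega

/-- A term is ground if it has no free variables. -/
def ATerm.Ground (t : ATerm) : Prop := t.fv = ∅

/-- (Possibly name-capturing) substitution of terms for variables. -/
def ATerm.subst (θ : ℕ → ATerm) : ATerm → ATerm
  | .name c    => .name c
  | .var X     => θ X
  | .swp a b t => .swp a b (ATerm.subst θ t)
  | .fn f ts   => .fn f (ts.attach.map (fun x => ATerm.subst θ x.1))
  | .abs c t   => .abs c (ATerm.subst θ t)
decreasing_by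
  all_goals simp_wf
  have := List.sizeOf_lt_of_mem x.2
  omega

/-- The freshness relation a # t, on (evaluated, swapping-free) ground nominal
terms; a variable contains no names. -/
inductive FreshA : ℕ → ATerm → Prop
  | name {a b : ℕ} : a ≠ b → FreshA a (.name b)
  | var {a X} : FreshA a (.var X)
  | fn {a f} {ts : List ATerm} : (∀ t ∈ ts, FreshA a t) → FreshA a (.fn f ts)
  | absSame {a t} : FreshA a (.abs a t)
  | absDiff {a b t} : a ≠ b → FreshA a t → FreshA a (.abs b t)

/-- α-equivalence t ≈ u on (evaluated, swapping-free) nominal terms. -/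
inductive AeqA : ATerm → ATerm → Prop
  | name (a : ℕ) : AeqA (.name a) (.name a)
  | var (X : ℕ) : AeqA (.var X) (.var X)
  | fn {f} {ts us : List ATerm} : List.Forall₂ AeqA ts us → AeqA (.fn f ts) (.fn f us)
  | absSame {a t u} : AeqA t u → AeqA (.abs a t) (.abs a u)
  | absDiff {a b t u} : a ≠ b → FreshA a u → AeqA t (u.swapf a b) →
      AeqA (.abs a t) (.abs b u)

/-- ⊨ a # t for ground terms t (evaluating suspended swappings first). -/
def ModelsFresh (a : ℕ) (t : ATerm) : Prop := FreshA a t.eval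

/-- ⊨ t ≈ u for ground terms t, u. -/
def ModelsEq (t u : ATerm) : Prop := AeqA t.eval u.eval

/-! ### αProlog goals and program clauses -/

/-- Goals: G ::= ⊤ | p(t⃗) | a # t | t ≈ u | G ∧ G' | G ∨ G' | ∃X.G | Иa.G. -/
inductive AGoal : Type
  | tt    : AGoal
  | atom  : ℕ → List ATerm → AGoal
  | fr    : ℕ → ATerm → AGoal          -- a # t
  | eq    : ATerm → ATerm → AGoal      -- t ≈ u
  | conj  : AGoal → AGoal → AGoal
  | disj  : AGoal → AGoal → AGoal
  | ex    : ℕ → AGoal → AGoal          -- ∃X.G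
  | nw    : ℕ → AGoal → AGoal          -- Иa.G

/-- Applying the swapping (a b) to a goal. -/
def AGoal.swapf (a b : ℕ) : AGoal → AGoal
  | .tt         => .tt
  | .atom p ts  => .atom p (ts.map (ATerm.swapf a b))
  | .fr c t     => .fr (swapName a b c) (t.swapf a b)
  | .eq t u     => .eq (t.swapf a b) (u.swapf a b)
  | .conj G G'  => .conj (AGoal.swapf a b G) (AGoal.swapf a b G')
  | .disj G G'  => .disj (AGoal.swapf a b G) (AGoal.swapf a b G')
  | .ex X G     => .ex X (AGoal.swapf a b G)
  | .nw c G     => .nw (swapName a b c) (AGoal.swapf a b G)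

/-- Free variables of a goal. -/
def AGoal.fv : AGoal → Finset ℕ
  | .tt        => ∅
  | .atom _ ts => ts.foldr (fun t s => t.fv ∪ s) ∅
  | .fr _ t    => t.fv
  | .eq t u    => t.fv ∪ u.fv
  | .conj G G' => AGoal.fv G ∪ AGoal.fv G'
  | .disj G G' => AGoal.fv G ∪ AGoal.fv G'
  | .ex X G    => AGoal.fv G \ {X}
  | .nw _ G    => AGoal.fv G

/-- Free names of a goal (Иa.G binds a). -/
def AGoal.names : AGoal → Finset ℕ
  | .tt        => ∅
  | .atom _ ts => ts.foldr (fun t s => t.names ∪ s) ∅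
  | .fr a t    => {a} ∪ t.names
  | .eq t u    => t.names ∪ u.names
  | .conj G G' => AGoal.names G ∪ AGoal.names G'
  | .disj G G' => AGoal.names G ∪ AGoal.names G'
  | .ex _ G    => AGoal.names G
  | .nw a G    => AGoal.names G \ {a}

/-- Substitution on goals (capture-avoiding for variable binders ∃X). -/
def AGoal.subst (θ : ℕ → ATerm) : AGoal → AGoal
  | .tt        => .tt
  | .atom p ts => .atom p (ts.map (ATerm.subst θ))
  | .fr a t    => .fr a (t.subst θ)
  | .eq t u    => .eq (t.subst θ) (u.subst θ)
  | .conj G G' => .conj (AGoal.subst θ G) (AGoal.subst θ G')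
  | .disj G G' => .disj (AGoal.subst θ G) (AGoal.subst θ G')
  | .ex X G    => .ex X (AGoal.subst (Function.update θ X (ATerm.var X)) G)
  | .nw a G    => .nw a (AGoal.subst θ G)

/-- A goal is ground if it has no free variables. -/
def AGoal.Ground (G : AGoal) : Prop := G.fv = ∅

/-- A program clause Иa⃗.∀X⃗.[p(t⃗) ⊢ G]. -/
structure AClause : Type where
  newNames : List ℕ       -- a⃗
  vars     : List ℕ       -- X⃗
  pred     : ℕ            -- p
  args     : List ATerm   -- t⃗
  body     : AGoal        -- G

/-- A clause is well-formed (closed) if all its free variables are among X⃗ and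
all its free names are among a⃗. -/
def AClause.WF (C : AClause) : Prop :=
  (∀ t ∈ C.args, ↑t.fv ⊆ (C.vars : List ℕ).toFinset ∧
      ↑t.names ⊆ (C.newNames : List ℕ).toFinset) ∧
  C.body.fv ⊆ C.vars.toFinset ∧ C.body.names ⊆ C.newNames.toFinset

/-- A permutation of names, given as a composition of (zero or more) swappings. -/
abbrev NPerm : Type := List (ℕ × ℕ)

/-- Applying a permutation to a term. -/
def NPerm.appT (π : NPerm) (t : ATerm) : ATerm :=
  π.foldr (fun p t => t.swapf p.1 p.2) t

/-- Applying a permutation to a goal. -/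
def NPerm.appG (π : NPerm) (G : AGoal) : AGoal :=
  π.foldr (fun p G => G.swapf p.1 p.2) G

/-- A substitution is ground on a given list of variables and the identity
elsewhere. -/
def GroundOn (θ : ℕ → ATerm) (Xs : List ℕ) : Prop :=
  (∀ X ∈ Xs, (θ X).Ground) ∧ ∀ X, X ∉ Xs → θ X = ATerm.var X

/-- αProlog provability Δ ⟹ G (Figure 2 of the paper). -/
inductive AProv (Δ : Set AClause) : AGoal → Prop
  | tt : AProv Δ .tt
  | fr {a t} : ModelsFresh a t → AProv Δ (.fr a t)
  | eq {t u} : ModelsEq t u → AProv Δ (.eq t u)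
  | conj {G G'} : AProv Δ G → AProv Δ G' → AProv Δ (.conj G G')
  | disjL {G G'} : AProv Δ G → AProv Δ (.disj G G')
  | disjR {G G'} : AProv Δ G' → AProv Δ (.disj G G')
  | ex {X G} (t : ATerm) : t.Ground →
      AProv Δ (G.subst (Function.update ATerm.var X t)) → AProv Δ (.ex X G)
  | nw {a G} : AProv Δ G → AProv Δ (.nw a G)
  | backchain {ts : List ATerm} (C : AClause) (π : NPerm) (θ : ℕ → ATerm) :
      C ∈ Δ → GroundOn θ C.vars →
      List.Forall₂ (fun t u => ModelsEq t u) ts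
        (C.args.map (fun u => π.appT (u.subst θ))) →
      AProv Δ (π.appG (C.body.subst θ)) →
      AProv Δ (.atom C.pred ts)

/-! ### Gᵐ terms.
Gᵐ terms (in βη-long raised form): nominal constants, variables raised over
lists of nominal constants (X a₁ ... aₙ), applied function constants, and
λ-abstractions over nominal constants (written with a concrete name for the
bound nominal constant, so terms are compared up to α-convertibility below). -/

inductive LTerm : Type
  | nom : ℕ → LTerm                  -- a nominal constant
  | var : ℕ → List ℕ → LTerm         -- a variable X applied to nominal constants a⃗
  | fn  : ℕ → List LTerm → LTerm     -- f t₁ ... tₙ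
  | lam : ℕ → LTerm → LTerm          -- λa.t, binding the nominal constant a

/-- Applying the swapping (a b) of nominal constants to a Gᵐ term; it also acts
on the nominal constants over which variables are raised and on binders. -/
def LTerm.swapf (a b : ℕ) : LTerm → LTerm
  | .nom c   => .nom (swapName a b c)
  | .var X l => .var X (l.map (swapName a b))
  | .fn f ts => .fn f (ts.attach.map (fun x => LTerm.swapf a b x.1))
  | .lam c t => .lam (swapName a b c) (LTerm.swapf a b t)
decreasing_by
  all_goals simp_wf
  have := List.sizeOf_lt_of_mem x.2
  omega

/-- Renaming the nominal constants of a Gᵐ term along a function. -/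
def LTerm.rename (ρ : ℕ → ℕ) : LTerm → LTerm
  | .nom c   => .nom (ρ c)
  | .var X l => .var X (l.map ρ)
  | .fn f ts => .fn f (ts.attach.map (fun x => LTerm.rename ρ x.1))
  | .lam c t => .lam (ρ c) (LTerm.rename ρ t)
decreasing_by
  all_goals simp_wf
  have := List.sizeOf_lt_of_mem x.2
  omega

/-- Free variables of a Gᵐ term. -/
def LTerm.fv : LTerm → Finset ℕ
  | .nom _   => ∅
  | .var X _ => {X}
  | .fn _ ts => ts.attach.foldr (fun x s => LTerm.fv x.1 ∪ s) ∅
  | .lam _ t => LTerm.fv t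
decreasing_by
  all_goals simp_wf
  have := List.sizeOf_lt_of_mem x.2
  omega

/-- The support of a Gᵐ term: the nominal constants occurring in it
(λ genuinely binds its nominal constant). -/
def LTerm.supp : LTerm → Finset ℕ
  | .nom c   => {c}
  | .var _ l => l.toFinset
  | .fn _ ts => ts.attach.foldr (fun x s => LTerm.supp x.1 ∪ s) ∅
  | .lam c t => LTerm.supp t \ {c}
decreasing_by
  all_goals simp_wf
  have := List.sizeOf_lt_of_mem x.2
  omega

/-- A Gᵐ term is closed if it has no free variables. -/
def LTerm.Closed (t : LTerm) : Prop := t.fv = ∅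

/-- a is fresh for (does not occur in the support of) a Gᵐ term. -/
inductive LFresh : ℕ → LTerm → Prop
  | nom {a c} : a ≠ c → LFresh a (.nom c)
  | var {a X l} : a ∉ l → LFresh a (.var X l)
  | fn {a f ts} : (∀ t ∈ ts, LFresh a t) → LFresh a (.fn f ts)
  | lamSame {a t} : LFresh a (.lam a t)
  | lamDiff {a c t} : a ≠ c → LFresh a t → LFresh a (.lam c t)

/-- Equality of Gᵐ terms modulo λ-conversion.  Terms are kept in βη-long raised
normal form, so λ-conversion amounts to α-convertibility of λ-binders. -/
inductive LAeq : LTerm → LTerm → Prop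
  | nom (c : ℕ) : LAeq (.nom c) (.nom c)
  | var (X : ℕ) (l : List ℕ) : LAeq (.var X l) (.var X l)
  | fn {f} {ts us : List LTerm} : List.Forall₂ LAeq ts us → LAeq (.fn f ts) (.fn f us)
  | lamSame {c t u} : LAeq t u → LAeq (.lam c t) (.lam c u)
  | lamDiff {c d t u} : c ≠ d → LFresh c u → LAeq t (u.swapf c d) →
      LAeq (.lam c t) (.lam d u)

/-- A substitution for Gᵐ variables: X ↦ λz⃗.u, recorded as the pair (z⃗, u)
(or none, meaning X is left untouched). -/
abbrev LSub : Type := ℕ → Option (List ℕ × LTerm)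

/-- Applying a substitution to a Gᵐ term, β-reducing on the fly: an occurrence
X a⃗ with X ↦ λz⃗.u becomes u with z⃗ renamed to a⃗. -/
def LTerm.subst (σ : LSub) : LTerm → LTerm
  | .nom c   => .nom c
  | .var X l =>
      match σ X with
      | none => .var X l
      | some (zs, u) => u.rename (fun n => ((zs.zip l).lookup n).getD n)
  | .fn f ts => .fn f (ts.attach.map (fun x => LTerm.subst σ x.1))
  | .lam c t => .lam c (LTerm.subst σ t)
decreasing_by
  all_goals simp_wf
  have := List.sizeOf_lt_of_mem x.2
  omega

/-! ### The translation φ on terms -/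

/-- The translation φ of αProlog terms into Gᵐ terms, parametrized by the
raising assignment ar giving, for each variable X, the list of names over
which X is raised: φ(a) = a, φ(X a⃗) = X a⃗, φ((a b)·t) = (a b)·φ(t),
φ(f(t⃗)) = f φ(t⃗), φ(⟨a⟩t) = λa.φ(t). -/
def phiT (ar : ℕ → List ℕ) : ATerm → LTerm
  | .name a    => .nom a
  | .var X     => .var X (ar X)
  | .swp a b t => (phiT ar t).swapf a b
  | .fn f ts   => .fn f (ts.attach.map (fun x => phiT ar x.1))
  | .abs a t   => .lam a (phiT ar t)
decreasing_by
  all_goals simp_wf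
  have := List.sizeOf_lt_of_mem x.2
  omega

/-- The translation φ(θ) of an αProlog substitution: each variable X with
θ(X) ≠ X is sent to λa⃗.φ(θ(X)) where a⃗ is the raising list of X. -/
noncomputable def phiSub (ar : ℕ → List ℕ) (θ : ℕ → ATerm) : LSub :=
  fun X => open Classical in
    if θ X = ATerm.var X then none else some (ar X, phiT ar (θ X))

/-- The support of a ground αProlog term t: the names a with ¬(a # t). -/
def ASupp (t : ATerm) : Set ℕ := {a | ¬ FreshA a t.eval}

/-! ### Gᵐ formulas and the translation of goals -/

/-- The predicate symbol reserved for the distinguished predicate fresh. -/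
def freshP : ℕ := 0

/-- Gᵐ formulas: B ::= ⊤ | p t⃗ | t = u | B ∧ C | B ∨ C | ∃x.B | ∇z.B
(∃ binds a variable by name, ∇ binds a nominal constant by name). -/
inductive GForm : Type
  | top  : GForm
  | atom : ℕ → List LTerm → GForm
  | eq   : LTerm → LTerm → GForm
  | conj : GForm → GForm → GForm
  | disj : GForm → GForm → GForm
  | exi  : ℕ → GForm → GForm
  | nab  : ℕ → GForm → GForm

/-- Applying the swapping (a b) of nominal constants to a Gᵐ formula. -/
def GForm.swapf (a b : ℕ) : GForm → GForm
  | .top       => .top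
  | .atom p ts => .atom p (ts.map (LTerm.swapf a b))
  | .eq t u    => .eq (t.swapf a b) (u.swapf a b)
  | .conj B C  => .conj (GForm.swapf a b B) (GForm.swapf a b C)
  | .disj B C  => .disj (GForm.swapf a b B) (GForm.swapf a b C)
  | .exi X B   => .exi X (GForm.swapf a b B)
  | .nab c B   => .nab (swapName a b c) (GForm.swapf a b B)

/-- Renaming nominal constants in a Gᵐ formula. -/
def GForm.rename (ρ : ℕ → ℕ) : GForm → GForm
  | .top       => .top
  | .atom p ts => .atom p (ts.map (LTerm.rename ρ))
  | .eq t u    => .eq (t.rename ρ) (u.rename ρ)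
  | .conj B C  => .conj (GForm.rename ρ B) (GForm.rename ρ C)
  | .disj B C  => .disj (GForm.rename ρ B) (GForm.rename ρ C)
  | .exi X B   => .exi X (GForm.rename ρ B)
  | .nab c B   => .nab (ρ c) (GForm.rename ρ B)

/-- The support of a Gᵐ formula (∇ binds its nominal constant). -/
def GForm.supp : GForm → Finset ℕ
  | .top       => ∅
  | .atom _ ts => ts.foldr (fun t s => t.supp ∪ s) ∅
  | .eq t u    => t.supp ∪ u.supp
  | .conj B C  => GForm.supp B ∪ GForm.supp C
  | .disj B C  => GForm.supp B ∪ GForm.supp C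
  | .exi _ B   => GForm.supp B
  | .nab c B   => GForm.supp B \ {c}

/-- Applying a substitution to a Gᵐ formula (bound variables are not
substituted for). -/
def GForm.subst (σ : LSub) : GForm → GForm
  | .top       => .top
  | .atom p ts => .atom p (ts.map (LTerm.subst σ))
  | .eq t u    => .eq (t.subst σ) (u.subst σ)
  | .conj B C  => .conj (GForm.subst σ B) (GForm.subst σ C)
  | .disj B C  => .disj (GForm.subst σ B) (GForm.subst σ C)
  | .exi X B   => .exi X (GForm.subst (Function.update σ X none) B)
  | .nab c B   => .nab c (GForm.subst σ B)

/-- Equality of Gᵐ formulas modulo λ-conversion of the terms occurring in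
them. -/
inductive FAeq : GForm → GForm → Prop
  | top : FAeq .top .top
  | atom {p ts us} : List.Forall₂ LAeq ts us → FAeq (.atom p ts) (.atom p us)
  | eq {t t' u u'} : LAeq t t' → LAeq u u' → FAeq (.eq t u) (.eq t' u')
  | conj {B B' C C'} : FAeq B B' → FAeq C C' → FAeq (.conj B C) (.conj B' C')
  | disj {B B' C C'} : FAeq B B' → FAeq C C' → FAeq (.disj B C) (.disj B' C')
  | exi {X B B'} : FAeq B B' → FAeq (.exi X B) (.exi X B')
  | nab {c B B'} : FAeq B B' → FAeq (.nab c B) (.nab c B')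

/-- Prefixing a formula with ∇-quantifiers for a list of nominal constants. -/
def nablas (l : List ℕ) (B : GForm) : GForm := l.foldr .nab B

/-- The translation φ_{a⃗} on goals (Figure 3 of the paper), parametrized by
the ambient raising assignment ar and the list a⃗ of names being pushed down:
atomic, freshness and equality goals get the ∇a⃗ prefix, ∃X.G raises X over a⃗
(recorded by updating ar at X), and Иb.G adds b to a⃗. -/
def phiG (ar : ℕ → List ℕ) (as : List ℕ) : AGoal → GForm
  | .tt        => .top
  | .atom p ts => nablas as (.atom p (ts.map (phiT ar)))
  | .fr a t    => nablas as (.atom freshP [.nom a, phiT ar t])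
  | .eq t u    => nablas as (.eq (phiT ar t) (phiT ar u))
  | .conj G G' => .conj (phiG ar as G) (phiG ar as G')
  | .disj G G' => .disj (phiG ar as G) (phiG ar as G')
  | .ex X G    => .exi X (phiG (Function.update ar X as) as G)
  | .nw b G    => phiG ar (as ++ [b]) G

/-- The support of an αProlog substitution θ: the names supporting some θ(X). -/
def SubSupp (θ : ℕ → ATerm) : Set ℕ := {a | ∃ X, a ∈ ASupp (θ X)}

/-! ### Gᵐ provability -/

/-- A definitional clause ∀x⃗.[(∇z⃗. p u⃗) ≜ B] for a predicate, presented by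
its set of instances: `inst us B'` holds when, for some choice of distinct
nominal constants z⃗ for the ∇-bound variables and of closed terms x⃗θ (with
supp(x⃗θ) ∩ {z⃗} = ∅) for the universal variables, the instantiated head is
p u⃗θ with u⃗θ = us and the instantiated body Bθ is B'. These conditions are
baked into the `inst` relation of each particular clause. -/
structure DefClause : Type where
  pred : ℕ
  inst : List LTerm → GForm → Prop

/-- Gᵐ provability ⟹ B from a set D of definitional clauses
(Figure 4 of the paper). -/
inductive GProv (D : Set DefClause) : GForm → Prop
  | top : GProv D .top
  | eq {t u} : LAeq t u → GProv D (.eq t u)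
  | conj {B C} : GProv D B → GProv D C → GProv D (.conj B C)
  | disjL {B C} : GProv D B → GProv D (.disj B C)
  | disjR {B C} : GProv D C → GProv D (.disj B C)
  | exi {X B} (zs : List ℕ) (u : LTerm) : u.Closed →
      GProv D (B.subst (fun Y => if Y = X then some (zs, u) else none)) →
      GProv D (.exi X B)
  | nab {a B} (b : ℕ) : b ∉ GForm.supp (.nab a B) →
      GProv D (B.swapf a b) → GProv D (.nab a B)
  | defR {ts : List LTerm} (c : DefClause) (us : List LTerm) (B : GForm) :
      c ∈ D → c.inst us B → List.Forall₂ LAeq ts us →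
      GProv D B → GProv D (.atom c.pred ts)

/-- The definitional clause ∀x.[(∇z. fresh z x) ≜ ⊤] for the distinguished
predicate fresh. -/
def freshClause : DefClause where
  pred := freshP
  inst := fun us B =>
    ∃ (z : ℕ) (u : LTerm), us = [.nom z, u] ∧ u.Closed ∧ z ∉ u.supp ∧ B = .top

/-! φ is compositional, sends ⟨a⟩t to λa.φ(t), and commutes with swapping; moreover a # t
holds exactly when a is fresh for φ(t). Hence the clauses defining ≈ (in particular
⟨a⟩t ≈ ⟨b⟩u iff a # u and t ≈ (a b)·u) match the clauses of α-conversion of λ-binders one for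
one, and induction on t gives both directions. The clauses of # and ≈ only speak about terms
without suspended swappings, which is why both sides are first evaluated: φ((a b)·t) is
(a b)·φ(t), so evaluation does not change φ. -/

local notation "φ" => phiT (fun _ => [])

theorem List.Forall₂.imp_of_mem {α β : Type*} {R S : α → β → Prop} :
    ∀ {l₁ : List α} {l₂ : List β}, (∀ a ∈ l₁, ∀ b ∈ l₂, R a b → S a b) →
      Forall₂ R l₁ l₂ → Forall₂ S l₁ l₂
  | _, _, _, .nil => .nil
  | _, _, H, .cons hab h =>
    .cons (H _ mem_cons_self _ mem_cons_self hab)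
      (h.imp_of_mem fun a ha b hb => H a (mem_cons_of_mem _ ha) b (mem_cons_of_mem _ hb))

lemma swapName_eq_swap (a b : ℕ) : swapName a b = Equiv.swap a b :=
  funext fun c => (Equiv.swap_apply_def a b c).symm

lemma swapName_swapName (a b c d e : ℕ) :
    swapName (swapName a b c) (swapName a b d) (swapName a b e)
      = swapName a b (swapName c d e) := by
  simp only [swapName_eq_swap, Equiv.swap_apply_apply, Equiv.Perm.mul_apply, Equiv.swap_inv,
    Equiv.swap_apply_self]

@[simp] lemma ATerm.swapf_fn (a b f : ℕ) (ts : List ATerm) :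
    (ATerm.fn f ts).swapf a b = .fn f (ts.map (ATerm.swapf a b)) := by
  rw [ATerm.swapf, List.attach_map_val]

@[simp] lemma ATerm.eval_fn (f : ℕ) (ts : List ATerm) :
    (ATerm.fn f ts).eval = .fn f (ts.map ATerm.eval) := by
  rw [ATerm.eval, List.attach_map_val]

@[simp] lemma LTerm.swapf_fn (a b f : ℕ) (ts : List LTerm) :
    (LTerm.fn f ts).swapf a b = .fn f (ts.map (LTerm.swapf a b)) := by
  rw [LTerm.swapf, List.attach_map_val]

@[simp] lemma phiT_fn (ar : ℕ → List ℕ) (f : ℕ) (ts : List ATerm) :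
    phiT ar (.fn f ts) = .fn f (ts.map (phiT ar)) := by
  rw [phiT, List.attach_map_val]

lemma LTerm.swapf_swapf (a b c d : ℕ) (s : LTerm) :
    (s.swapf c d).swapf a b = (s.swapf a b).swapf (swapName a b c) (swapName a b d) := by
  induction s using LTerm.swapf.induct with
  | case3 f ts ih =>
    simp only [LTerm.swapf_fn, List.map_map]
    exact congrArg _ (List.map_congr_left fun s hs => ih ⟨s, hs⟩)
  | _ => simp_all [LTerm.swapf, swapName_swapName]

lemma phiT_swapf (a b : ℕ) (t : ATerm) : φ (t.swapf a b) = (φ t).swapf a b := by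
  induction t using phiT.induct with
  | case3 c d t ih =>
    simp only [ATerm.swapf, phiT, ih]
    exact (LTerm.swapf_swapf ..).symm
  | case4 f ts ih =>
    simp only [ATerm.swapf_fn, phiT_fn, LTerm.swapf_fn, List.map_map]
    exact congrArg _ (List.map_congr_left fun s hs => ih ⟨s, hs⟩)
  | _ => simp_all [ATerm.swapf, phiT, LTerm.swapf]

lemma phiT_eval (t : ATerm) : φ t.eval = φ t := by
  induction t using ATerm.eval.induct with
  | case4 f ts ih =>
    simp only [ATerm.eval_fn, phiT_fn, List.map_map]
    exact congrArg _ (List.map_congr_left fun s hs => ih ⟨s, hs⟩)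
  | _ => simp_all [ATerm.eval, phiT, phiT_swapf]

inductive ATerm.SwapFree : ATerm → Prop
  | name (a : ℕ) : SwapFree (.name a)
  | var (X : ℕ) : SwapFree (.var X)
  | fn {f ts} : (∀ t ∈ ts, SwapFree t) → SwapFree (.fn f ts)
  | abs (a : ℕ) {t} : SwapFree t → SwapFree (.abs a t)

lemma ATerm.SwapFree.swapf {t : ATerm} (h : t.SwapFree) (a b : ℕ) : (t.swapf a b).SwapFree := by
  induction h with
  | fn _ ih =>
    rw [ATerm.swapf_fn]
    exact .fn (by simpa using ih)
  | _ => simp_all [ATerm.swapf, SwapFree.name, SwapFree.var, SwapFree.abs]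

lemma ATerm.swapFree_eval (t : ATerm) : t.eval.SwapFree := by
  induction t using ATerm.eval.induct with
  | case4 f ts ih =>
    rw [ATerm.eval_fn]
    exact .fn (by simpa using fun s hs => ih ⟨s, hs⟩)
  | _ => simp_all [ATerm.eval, SwapFree.name, SwapFree.var, SwapFree.abs, SwapFree.swapf]

lemma lFresh_phiT_of_freshA {a : ℕ} {t : ATerm} (h : FreshA a t) : LFresh a (φ t) := by
  induction h with
  | fn _ ih =>
    rw [phiT_fn]
    exact .fn (by simpa using ih)
  | _ => simp_all [phiT, LFresh.nom, LFresh.var, LFresh.lamSame, LFresh.lamDiff]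

lemma freshA_of_lFresh_phiT {a : ℕ} {t : ATerm} (ht : t.SwapFree) (h : LFresh a (φ t)) :
    FreshA a t := by
  induction ht with
  | name c => rw [phiT] at h; cases h with | nom hne => exact .name hne
  | var X => exact .var
  | fn _ ih =>
    rw [phiT_fn] at h
    cases h with | fn h => exact .fn fun s hs => ih s hs (h _ (List.mem_map_of_mem hs))
  | abs c _ ih =>
    rw [phiT] at h
    cases h with
    | lamSame => exact .absSame
    | lamDiff hne h => exact .absDiff hne (ih h)

theorem lAeq_phiT_of_aeqA : ∀ {t u : ATerm}, AeqA t u → LAeq (φ t) (φ u)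
  | _, _, .name a => by rw [phiT]; exact .nom a
  | _, _, .var X => by rw [phiT]; exact .var X []
  | _, _, .fn h => by
    rw [phiT_fn, phiT_fn]
    refine .fn (List.forall₂_map_left_iff.2 (List.forall₂_map_right_iff.2 ?_))
    exact h.imp_of_mem fun _ _ _ _ h => lAeq_phiT_of_aeqA h
  | _, _, .absSame h => by rw [phiT, phiT]; exact .lamSame (lAeq_phiT_of_aeqA h)
  | _, _, .absDiff hne hf h => by
    rw [phiT, phiT]
    exact .lamDiff hne (lFresh_phiT_of_freshA hf) (phiT_swapf _ _ _ ▸ lAeq_phiT_of_aeqA h)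

theorem aeqA_of_lAeq_phiT {t u : ATerm} (ht : t.SwapFree) (hu : u.SwapFree)
    (h : LAeq (φ t) (φ u)) : AeqA t u := by
  induction ht generalizing u with
  | name a =>
    cases hu <;> simp only [phiT, phiT_fn] at h <;> cases h
    exact .name a
  | var X =>
    cases hu <;> simp only [phiT, phiT_fn] at h <;> cases h
    exact .var X
  | fn _ ih =>
    cases hu with
    | fn hus =>
      rw [phiT_fn, phiT_fn] at h
      cases h with | fn h =>
      rw [List.forall₂_map_left_iff, List.forall₂_map_right_iff] at h
      exact .fn (h.imp_of_mem fun t ht u hu => ih t ht (hus u hu))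
    | _ => simp only [phiT] at h; cases h
  | abs a _ ih =>
    cases hu with
    | abs b hu =>
      rw [phiT, phiT] at h
      cases h with
      | lamSame h => exact .absSame (ih hu h)
      | lamDiff hne hf h =>
        exact .absDiff hne (freshA_of_lFresh_phiT hu hf) (ih (hu.swapf a b) (phiT_swapf .. ▸ h))
    | _ => simp only [phiT, phiT_fn] at h; cases h

theorem aeq_iff_phi_eq_general (t u : ATerm) :
    ModelsEq t u ↔ LAeq (phiT (fun _ => []) t) (phiT (fun _ => []) u) := by
  rw [ModelsEq, ← phiT_eval t, ← phiT_eval u]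
  exact ⟨lAeq_phiT_of_aeqA, aeqA_of_lAeq_phiT (ATerm.swapFree_eval t) (ATerm.swapFree_eval u)⟩

/-- α-equivalence is captured by equality of translations: for
ground αProlog terms t and u, ⊨ t ≈ u holds iff φ(t) = φ(u), equality of Gᵐ
terms being modulo λ-conversion (here α-convertibility, terms being kept in
βη-long form). -/
theorem aeq_iff_phi_eq (t u : ATerm) (ht : t.Ground) (hu : u.Ground) :
    ModelsEq t u ↔ LAeq (phiT (fun _ => []) t) (phiT (fun _ => []) u) :=
  aeq_iff_phi_eq_general t u
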